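/- arXiv:1604.02617 — 8 statements merged into one kernel-verified Lean document; each statement's English description precedes it below -/
import Mathlib

section
/- Let Q be a real d×d matrix whose off-diagonal entries are nonnegative and whose columns each sum to zero, and let λ ∈ ℝ^d have all entries strictly positive. Then the matrix Q_λ := Q − diag(λ) is invertible. -/
open Finset

namespace Matrix

variable {n : Type*} [Fintype n] [DecidableEq n]

/-- A Z-matrix with negative column sums is strictly column diagonally dominant. -/
theorem det_ne_zero_of_offDiag_nonneg_of_sum_col_neg {A : Matrix n n ℝ}
    (hoff : ∀ i j, i ≠ j → 0 ≤ A i j) (hcol : ∀ j, ∑ i, A i j < 0) : A.det ≠ 0 := by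
  refine det_ne_zero_of_sum_col_lt_diag fun k => ?_
  have hnorm : ∀ i ∈ univ.erase k, ‖A i k‖ = A i k := fun i hi =>
    Real.norm_of_nonneg (hoff i k (ne_of_mem_erase hi))
  have hrest_nonneg : 0 ≤ ∑ i ∈ univ.erase k, A i k :=
    sum_nonneg fun i hi => hoff i k (ne_of_mem_erase hi)
  have hsplit := add_sum_erase univ (fun i => A i k) (mem_univ k)
  have hkk : A k k < 0 := by linarith [hcol k]
  rw [sum_congr rfl hnorm, Real.norm_of_nonpos hkk.le]
  linarith [hcol k]

theorem sum_col_sub_diagonal (Q : Matrix n n ℝ) (l : n → ℝ) (j : n) :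
    ∑ i, (Q - diagonal l) i j = ∑ i, Q i j - l j := by
  simp [sub_apply, sum_sub_distrib, diagonal_apply]

end Matrix

theorem stmt_0_general (d : ℕ) (Q : Matrix (Fin d) (Fin d) ℝ)
    (hQoff : ∀ i j, i ≠ j → 0 ≤ Q i j)
    (hQcol : ∀ j, ∑ i, Q i j = 0)
    (l : Fin d → ℝ) (hl : ∀ i, 0 < l i) :
    IsUnit (Q - Matrix.diagonal l) := by
  rw [Matrix.isUnit_iff_isUnit_det, isUnit_iff_ne_zero]
  refine Matrix.det_ne_zero_of_offDiag_nonneg_of_sum_col_neg (fun i j hij => ?_) fun j => ?_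
  · simpa [Matrix.diagonal_apply_ne _ hij] using hQoff i j hij
  · rw [Matrix.sum_col_sub_diagonal, hQcol j]
    linarith [hl j]

/-- An intensity matrix minus a positive diagonal is invertible. -/
theorem stmt_0 (d : ℕ) (hd : 1 ≤ d) (Q : Matrix (Fin d) (Fin d) ℝ)
    (hQoff : ∀ i j, i ≠ j → 0 ≤ Q i j)
    (hQcol : ∀ j, ∑ i, Q i j = 0)
    (l : Fin d → ℝ) (hl : ∀ i, 0 < l i) :
    IsUnit (Q - Matrix.diagonal l) :=
  stmt_0_general d Q hQoff hQcol l hl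
end

section
/- Let Q be a real d×d matrix whose off-diagonal entries are nonnegative and whose columns each sum to zero, and let λ ∈ ℝ^d have all entries strictly positive. Then exp(t(Q − diag(λ))) tends to the zero matrix as t → ∞. -/
/-!
Shift the generator: for `c` large, `B = Qᵀ - diag λ + c • 1` has nonnegative entries and row
sums `c - λᵢ < c`, so its `ℓ∞` operator norm is `< c`. Since `c • 1` is central,
`‖exp (t (B - c • 1))‖ ≤ exp (t ‖B‖) e^{-ct}`, which decays exponentially.
-/

open NormedSpace Filter Topology

namespace NormedSpace

variable {𝔸 : Type*} [NormedRing 𝔸] [NormOneClass 𝔸] [NormedAlgebra ℝ 𝔸]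

lemma norm_exp_le_exp_norm (x : 𝔸) : ‖exp x‖ ≤ Real.exp ‖x‖ := by
  rw [exp_eq_tsum ℝ, Real.exp_eq_exp_ℝ, exp_eq_tsum ℝ]
  have hsum : Summable fun n : ℕ => (n.factorial : ℝ)⁻¹ • ‖x‖ ^ n := by
    simpa [norm_smul] using norm_expSeries_summable' (𝕂 := ℝ) ‖x‖
  refine (norm_tsum_le_tsum_norm (norm_expSeries_summable' x)).trans
    (Summable.tsum_le_tsum (fun n => ?_) (norm_expSeries_summable' x) hsum)
  rw [norm_smul, smul_eq_mul, norm_inv, RCLike.norm_natCast]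
  gcongr
  exact norm_pow_le x n

variable [CompleteSpace 𝔸]

lemma norm_exp_smul_le (x : 𝔸) (c : ℝ) {t : ℝ} (ht : 0 ≤ t) :
    ‖exp (t • x)‖ ≤ Real.exp (t * (‖x + c • (1 : 𝔸)‖ - c)) := by
  have hsplit : t • x = t • (x + c • (1 : 𝔸)) + (-(t * c)) • (1 : 𝔸) := by module
  have hscalar : exp ((-(t * c)) • (1 : 𝔸)) = Real.exp (-(t * c)) • (1 : 𝔸) := by
    simpa only [Algebra.algebraMap_eq_smul_one, Real.exp_eq_exp_ℝ] using
      (algebraMap_exp_comm (𝔸 := 𝔸) (-(t * c))).symm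
  let +nondep : NormedAlgebra ℚ 𝔸 := .restrictScalars ℚ ℝ 𝔸
  rw [hsplit, exp_add_of_commute ((Commute.one_right _).smul_right _), hscalar, mul_smul_one,
    norm_smul, Real.norm_of_nonneg (Real.exp_pos _).le, mul_comm]
  calc ‖exp (t • (x + c • (1 : 𝔸)))‖ * Real.exp (-(t * c))
      ≤ Real.exp (t * ‖x + c • (1 : 𝔸)‖) * Real.exp (-(t * c)) := by
        gcongr
        refine (norm_exp_le_exp_norm _).trans_eq ?_
        rw [norm_smul, Real.norm_of_nonneg ht]
    _ = _ := by rw [← Real.exp_add]; ring_nf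

lemma tendsto_exp_smul_atTop_zero_of_norm_add_smul_one_lt {x : 𝔸} {c : ℝ}
    (h : ‖x + c • (1 : 𝔸)‖ < c) : Tendsto (fun t : ℝ => exp (t • x)) atTop (𝓝 0) := by
  refine squeeze_zero_norm' ?_ (Real.tendsto_exp_atBot.comp
    (tendsto_id.atTop_mul_const_of_neg (sub_neg.mpr h)))
  filter_upwards [eventually_ge_atTop 0] with t ht using norm_exp_smul_le x c ht

end NormedSpace

namespace Matrix

variable {n : Type*} [Fintype n] [DecidableEq n]

lemma sum_norm_add_smul_one_apply {M : Matrix n n ℝ} (hoff : ∀ i j, i ≠ j → 0 ≤ M i j)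
    {c : ℝ} (hc : ∀ i, -M i i ≤ c) (i : n) :
    ∑ j, ‖(M + c • (1 : Matrix n n ℝ)) i j‖ = ∑ j, M i j + c := by
  have hnonneg : ∀ j, 0 ≤ (M + c • (1 : Matrix n n ℝ)) i j := by
    intro j
    rcases eq_or_ne i j with rfl | hij
    · simpa [neg_le_iff_add_nonneg'] using hc i
    · simpa [one_apply_ne hij] using hoff i j hij
  calc ∑ j, ‖(M + c • (1 : Matrix n n ℝ)) i j‖ = ∑ j, (M + c • (1 : Matrix n n ℝ)) i j :=
        Finset.sum_congr rfl fun j _ => Real.norm_of_nonneg (hnonneg j)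
    _ = ∑ j, M i j + c := by simp [Finset.sum_add_distrib, one_apply]

attribute [local instance] Matrix.linftyOpNormedAddCommGroup Matrix.linftyOpNormedRing
  Matrix.linftyOpNormedAlgebra

lemma linfty_opNorm_lt_of_forall_sum_lt {A : Matrix n n ℝ} {r : ℝ} (hr : 0 < r)
    (h : ∀ i, ∑ j, ‖A i j‖ < r) : ‖A‖ < r := by
  lift r to NNReal using hr.le
  rw [linfty_opNorm_def, NNReal.coe_lt_coe, Finset.sup_lt_iff (mod_cast hr)]
  exact fun i _ => by rw [← NNReal.coe_lt_coe]; push_cast; exact h i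

theorem tendsto_exp_smul_atTop_zero_of_row_sum_neg {M : Matrix n n ℝ}
    (hoff : ∀ i j, i ≠ j → 0 ≤ M i j) (hrow : ∀ i, ∑ j, M i j < 0) :
    Tendsto (fun t : ℝ => exp (t • M)) atTop (𝓝 0) := by
  -- `‖1‖ = 1` for the `ℓ∞` operator norm only when `n` is nonempty.
  cases isEmpty_or_nonempty n
  · simpa only [Subsingleton.elim _ (0 : Matrix n n ℝ)] using tendsto_const_nhds
  set c : ℝ := 1 + ∑ i, |M i i|
  have hc_pos : 0 < c := by positivity
  have hc : ∀ i, -M i i ≤ c := fun i => calc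
    -M i i ≤ |M i i| := neg_le_abs _
    _ ≤ ∑ i, |M i i| := Finset.single_le_sum (fun i _ => abs_nonneg (M i i)) (Finset.mem_univ i)
    _ ≤ c := le_add_of_nonneg_left zero_le_one
  refine tendsto_exp_smul_atTop_zero_of_norm_add_smul_one_lt
    (linfty_opNorm_lt_of_forall_sum_lt hc_pos fun i => ?_)
  rw [sum_norm_add_smul_one_apply hoff hc]
  linarith [hrow i]

theorem tendsto_exp_smul_atTop_zero_of_col_sum_neg {M : Matrix n n ℝ}
    (hoff : ∀ i j, i ≠ j → 0 ≤ M i j) (hcol : ∀ j, ∑ i, M i j < 0) :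
    Tendsto (fun t : ℝ => exp (t • M)) atTop (𝓝 0) := by
  have hT := tendsto_exp_smul_atTop_zero_of_row_sum_neg (M := Mᵀ)
    (fun i j hij => hoff j i hij.symm) hcol
  have hcont : Continuous (transpose : Matrix n n ℝ → Matrix n n ℝ) :=
    continuous_id.matrix_transpose
  simpa only [Function.comp_def, ← exp_transpose, transpose_smul, transpose_transpose,
    transpose_zero] using (hcont.tendsto 0).comp hT

end Matrix

theorem stmt_1_general (d : ℕ) (Q : Matrix (Fin d) (Fin d) ℝ)
    (hQoff : ∀ i j, i ≠ j → 0 ≤ Q i j)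
    (hQcol : ∀ j, ∑ i, Q i j = 0)
    (l : Fin d → ℝ) (hl : ∀ i, 0 < l i) :
    Tendsto (fun t : ℝ => exp (t • (Q - Matrix.diagonal l))) atTop (nhds 0) := by
  refine Matrix.tendsto_exp_smul_atTop_zero_of_col_sum_neg (fun i j hij => ?_) fun j => ?_
  · simpa [Matrix.diagonal_apply_ne _ hij] using hQoff i j hij
  · simpa [Finset.sum_sub_distrib, Matrix.diagonal_apply, hQcol j] using hl j

/-- For an intensity matrix `Q` and positive `λ`, `exp(t(Q − diag λ)) → 0` as `t → ∞`. -/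
theorem stmt_1 (d : ℕ) (hd : 1 ≤ d) (Q : Matrix (Fin d) (Fin d) ℝ)
    (hQoff : ∀ i j, i ≠ j → 0 ≤ Q i j)
    (hQcol : ∀ j, ∑ i, Q i j = 0)
    (l : Fin d → ℝ) (hl : ∀ i, 0 < l i) :
    Tendsto (fun t : ℝ => exp (t • (Q - Matrix.diagonal l))) atTop (nhds 0) :=
  stmt_1_general d Q hQoff hQcol l hl
end

section
/- Let Q' be a real d×d matrix whose off-diagonal entries are nonnegative and whose columns each sum to zero. Then the matrix I − Q' is invertible. -/
/-! `I - Q'` is strictly diagonally dominant by columns: off the diagonal its `k`-th column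
has absolute values `Q' i k`, whose sum `s` is `-Q' k k` because the column of `Q'` sums to
zero, while its diagonal entry is `1 + s`. Gershgorin's theorem then gives `det (I - Q') ≠ 0`. -/

open Finset

namespace Matrix

variable {n : Type*} [Fintype n] [DecidableEq n] {Q : Matrix n n ℝ}

theorem diag_eq_neg_sum_offDiag_of_sum_col_eq_zero (hcol : ∀ j, ∑ i, Q i j = 0) (k : n) :
    Q k k = -∑ i ∈ univ.erase k, Q i k := by
  have := hcol k
  rw [← sum_erase_add _ _ (mem_univ k)] at this
  linarith

theorem sum_offDiag_norm_one_sub_col (hoff : ∀ i j, i ≠ j → 0 ≤ Q i j) (k : n) :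
    ∑ i ∈ univ.erase k, ‖(1 - Q) i k‖ = ∑ i ∈ univ.erase k, Q i k := by
  refine sum_congr rfl fun i hi => ?_
  have hik := ne_of_mem_erase hi
  simp [sub_apply, one_apply_ne hik, abs_of_nonneg (hoff i k hik)]

theorem isUnit_one_sub_of_offDiag_nonneg_of_sum_col_eq_zero
    (hoff : ∀ i j, i ≠ j → 0 ≤ Q i j) (hcol : ∀ j, ∑ i, Q i j = 0) : IsUnit (1 - Q) := by
  rw [isUnit_iff_isUnit_det, isUnit_iff_ne_zero]
  refine det_ne_zero_of_sum_col_lt_diag fun k => ?_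
  have hs : 0 ≤ ∑ i ∈ univ.erase k, Q i k :=
    sum_nonneg fun i hi => hoff i k (ne_of_mem_erase hi)
  have hdiag : (1 - Q) k k = 1 + ∑ i ∈ univ.erase k, Q i k := by
    rw [sub_apply, one_apply_eq, diag_eq_neg_sum_offDiag_of_sum_col_eq_zero hcol k]
    ring
  rw [sum_offDiag_norm_one_sub_col hoff, hdiag, Real.norm_eq_abs, abs_of_nonneg (by linarith)]
  linarith

end Matrix

theorem stmt_2_general (d : ℕ) (Q' : Matrix (Fin d) (Fin d) ℝ)
    (hQoff : ∀ i j, i ≠ j → 0 ≤ Q' i j)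
    (hQcol : ∀ j, ∑ i, Q' i j = 0) :
    IsUnit ((1 : Matrix (Fin d) (Fin d) ℝ) - Q') :=
  Matrix.isUnit_one_sub_of_offDiag_nonneg_of_sum_col_eq_zero hQoff hQcol

/-- For an intensity matrix `Q'`, the matrix `I − Q'` is invertible. -/
theorem stmt_2 (d : ℕ) (hd : 1 ≤ d) (Q' : Matrix (Fin d) (Fin d) ℝ)
    (hQoff : ∀ i j, i ≠ j → 0 ≤ Q' i j)
    (hQcol : ∀ j, ∑ i, Q' i j = 0) :
    IsUnit ((1 : Matrix (Fin d) (Fin d) ℝ) - Q') :=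
  stmt_2_general d Q' hQoff hQcol
end

section
/- Let Q be any real d×d matrix and λ ∈ ℝ^d. For n ∈ ℕ, let A be the real (n+1)×(n+1) matrix (rows and columns indexed by 0,…,n) with A_{ii} = −(n−i), A_{i+1,i} = n−i for 0 ≤ i ≤ n−1, and all other entries zero; let 𝐐 = A ⊗ diag(λ) + I_{n+1} ⊗ Q. Let V and W be the (n+1)×(n+1) matrices with V_{ij} = (−1)^{i−j}·C(n−j, n−i) for i ≥ j, V_{ij} = 0 for i < j, and W_{ij} = C(n−j, n−i). Then (W ⊗ I_d)·𝐐·(V ⊗ I_d) = I_{n+1} ⊗ Q − D ⊗ diag(λ), where D is the (n+1)×(n+1) diagonal matrix with D_{ii} = n−i; that is, the conjugated matrix is block diagonal with i-th diagonal block Q − (n−i)·diag(λ). -/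
/-!
Index rows and columns by `p = n - i`. Then `W` is the matrix of the substitution `x ↦ x + 1` on
polynomials of degree `≤ n` in the monomial basis, `V` is that of `x ↦ x - 1`, and `A` is that of
`(1 - x) d/dx`. So `W V = 1` (binomial inversion), and `W A = -D W`, since conjugating by the
shift turns `(1 - x) d/dx` into `-x d/dx`, which is diagonal with entries `-(n - i)`. Both
identities pass through the Kronecker factor `I_d`.
-/

open Finset Matrix Kronecker

theorem Nat.mul_choose_pred_add_mul_choose (m s : ℕ) :
    m * (m - 1).choose s + s * m.choose s = m * m.choose s := by
  cases m with
  | zero => cases s <;> simp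
  | succ m =>
    rcases le_or_gt s (m + 1) with hs | hs
    · rw [Nat.add_sub_cancel, mul_comm, Nat.choose_mul_succ_eq, mul_comm s, ← mul_add,
        Nat.sub_add_cancel hs, mul_comm]
    · simp [Nat.choose_eq_zero_of_lt hs, Nat.choose_eq_zero_of_lt (Nat.lt_of_succ_lt hs)]

theorem Matrix.neg_kronecker {α l m n p : Type*} [Mul α] [HasDistribNeg α]
    (A : Matrix l m α) (B : Matrix n p α) : (-A) ⊗ₖ B = -(A ⊗ₖ B) := by
  ext ⟨_, _⟩ ⟨_, _⟩
  exact neg_mul _ _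

theorem Fin.sum_univ_sub_eq_sum_range {M : Type*} [AddCommMonoid M] (f : ℕ → M) (n : ℕ) :
    ∑ k : Fin (n + 1), f (n - k) = ∑ b ∈ range (n + 1), f b := by
  rw [Fin.sum_univ_eq_sum_range (fun k => f (n - k))]
  simpa using sum_range_reflect f (n + 1)

variable {R : Type*} [CommRing R]

theorem sum_range_neg_one_pow_mul_choose (m : ℕ) :
    ∑ t ∈ range (m + 1), (-1 : R) ^ (m - t) * m.choose t = if m = 0 then 1 else 0 := by
  simpa [← zero_pow_eq] using (add_pow (1 : R) (-1) m).symm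

theorem sum_range_choose_mul_neg_one_pow_mul_choose {N c : ℕ} (a : ℕ) (hc : c < N) :
    ∑ b ∈ range N, (b.choose a : R) * ((-1) ^ (c - b) * c.choose b) = if a = c then 1 else 0 := by
  have hrange : ∑ b ∈ range N, (b.choose a : R) * ((-1) ^ (c - b) * c.choose b) =
      ∑ b ∈ range (c + 1), (b.choose a : R) * ((-1) ^ (c - b) * c.choose b) := by
    refine (sum_subset (range_subset_range.2 hc) fun b _ hb => ?_).symm
    rw [Nat.choose_eq_zero_of_lt (show c < b by simpa using hb)]
    simp
  rw [hrange]
  obtain ⟨m, rfl⟩ | hca := le_or_gt a c |>.imp Nat.exists_eq_add_of_le id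
  · have htail : ∀ t, ((a + t).choose a : R) * ((-1) ^ (a + m - (a + t)) * (a + m).choose (a + t))
        = (a + m).choose a * ((-1) ^ (m - t) * m.choose t) := by
      intro t
      have h := Nat.choose_mul (n := a + m) (Nat.le_add_right a t)
      simp only [Nat.add_sub_cancel_left, Nat.add_sub_add_left] at h ⊢
      have h' : ((a + m).choose (a + t) : R) * (a + t).choose a = (a + m).choose a * m.choose t := by
        exact_mod_cast congrArg (Nat.cast : ℕ → R) h
      linear_combination (-1 : R) ^ (m - t) * h'
    rw [add_assoc, sum_range_add, sum_eq_zero fun b hb => by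
      rw [Nat.choose_eq_zero_of_lt (mem_range.1 hb), Nat.cast_zero, zero_mul]]
    simp only [htail, zero_add, ← mul_sum, sum_range_neg_one_pow_mul_choose]
    rcases m with _ | m <;> simp
  · rw [sum_eq_zero fun b hb => by
      rw [Nat.choose_eq_zero_of_lt (by have := mem_range.1 hb; omega), Nat.cast_zero, zero_mul],
      if_neg hca.ne']

variable (R) in
def binomialMatrix (n : ℕ) : Matrix (Fin (n + 1)) (Fin (n + 1)) R :=
  of fun i j => ((n - j).choose (n - i) : R)

/- The exponent `(n - j) - (n - i)` agrees with `i - j` whenever the binomial is nonzero, and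
avoids the case split `j ≤ i`. -/
variable (R) in
def signedBinomialMatrix (n : ℕ) : Matrix (Fin (n + 1)) (Fin (n + 1)) R :=
  of fun i j => (-1) ^ ((n - j) - (n - i)) * ((n - j).choose (n - i) : R)

variable (R) in
def birthGenerator (n : ℕ) : Matrix (Fin (n + 1)) (Fin (n + 1)) R :=
  of fun i j => if i = j then -((n - i : ℕ) : R) else if (i : ℕ) = j + 1 then ((n - j : ℕ) : R) else 0

theorem binomialMatrix_mul_signedBinomialMatrix (n : ℕ) :
    binomialMatrix R n * signedBinomialMatrix R n = 1 := by
  ext i j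
  have hreindex := Fin.sum_univ_sub_eq_sum_range
    (fun b => (b.choose (n - i) : R) * ((-1) ^ (n - j - b) * (n - j).choose b)) n
  simp only [mul_apply, binomialMatrix, signedBinomialMatrix, of_apply] at hreindex ⊢
  rw [hreindex, sum_range_choose_mul_neg_one_pow_mul_choose _ (by omega), one_apply]
  simp only [Fin.ext_iff]
  congr 1
  grind

theorem binomialMatrix_mul_birthGenerator (n : ℕ) :
    binomialMatrix R n * birthGenerator R n =
      -(diagonal (fun i : Fin (n + 1) => ((n - i : ℕ) : R)) * binomialMatrix R n) := by
  ext i j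
  have hrange := Fin.sum_univ_eq_sum_range (fun k => ((n - k).choose (n - i) : R) *
    if k = j then -((n - k : ℕ) : R) else if k = j + 1 then ((n - j : ℕ) : R) else 0) (n + 1)
  simp only [mul_apply, binomialMatrix, birthGenerator, of_apply, Fin.ext_iff] at hrange ⊢
  rw [hrange, sum_eq_add (j : ℕ) (j + 1) (by omega) (fun k _ hk => by simp [hk.1, hk.2])
    (fun hj => absurd (mem_range.2 j.isLt) hj)
    (fun hj => by rw [mem_range] at hj; simp [show n - j = 0 by omega]),
    Matrix.neg_apply, diagonal_mul, of_apply]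
  have key := congrArg (Nat.cast : ℕ → R) (Nat.mul_choose_pred_add_mul_choose (n - j) (n - i))
  push_cast at key
  simp only [if_true, if_neg (Nat.succ_ne_self _), show n - (j + 1) = n - j - 1 by omega]
  linear_combination key

theorem binomialMatrix_mul_birthGenerator_mul_signedBinomialMatrix (n : ℕ) :
    binomialMatrix R n * birthGenerator R n * signedBinomialMatrix R n =
      -diagonal (fun i : Fin (n + 1) => ((n - i : ℕ) : R)) := by
  rw [binomialMatrix_mul_birthGenerator, Matrix.neg_mul, Matrix.mul_assoc,
    binomialMatrix_mul_signedBinomialMatrix, Matrix.mul_one]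

theorem kronecker_one_mul_mul_kronecker_one_of_mul_eq_one {ι κ : Type*}
    [Fintype ι] [DecidableEq ι] [Fintype κ] [DecidableEq κ] {W V : Matrix ι ι R}
    (A : Matrix ι ι R) (L Q : Matrix κ κ R) (hWV : W * V = 1) :
    (W ⊗ₖ 1) * (A ⊗ₖ L + 1 ⊗ₖ Q) * (V ⊗ₖ 1) = (W * A * V) ⊗ₖ L + 1 ⊗ₖ Q := by
  simp only [Matrix.mul_add, Matrix.add_mul, ← mul_kronecker_mul, Matrix.mul_one, Matrix.one_mul,
    hWV]

theorem stmt_4_general (d : ℕ) (n : ℕ)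
    (Q : Matrix (Fin d) (Fin d) ℝ) (l : Fin d → ℝ)
    (A : Matrix (Fin (n + 1)) (Fin (n + 1)) ℝ)
    (hA : ∀ i j : Fin (n + 1), A i j =
      if i = j then -((n - (i : ℕ) : ℕ) : ℝ)
      else if (i : ℕ) = (j : ℕ) + 1 then ((n - (j : ℕ) : ℕ) : ℝ) else 0)
    (V W : Matrix (Fin (n + 1)) (Fin (n + 1)) ℝ)
    (hV : ∀ i j : Fin (n + 1), V i j =
      if (j : ℕ) ≤ (i : ℕ) then (-1 : ℝ) ^ ((i : ℕ) - (j : ℕ)) * (Nat.choose (n - j) (n - i)) else 0)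
    (hW : ∀ i j : Fin (n + 1), W i j = (Nat.choose (n - j) (n - i) : ℝ))
    (bQ : Matrix (Fin (n + 1) × Fin d) (Fin (n + 1) × Fin d) ℝ)
    (hbQ : bQ = A ⊗ₖ Matrix.diagonal l + (1 : Matrix (Fin (n + 1)) (Fin (n + 1)) ℝ) ⊗ₖ Q) :
    (W ⊗ₖ (1 : Matrix (Fin d) (Fin d) ℝ)) * bQ * (V ⊗ₖ (1 : Matrix (Fin d) (Fin d) ℝ)) =
      (1 : Matrix (Fin (n + 1)) (Fin (n + 1)) ℝ) ⊗ₖ Q -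
        Matrix.diagonal (fun i : Fin (n + 1) => ((n - (i : ℕ) : ℕ) : ℝ)) ⊗ₖ Matrix.diagonal l := by
  have hA' : A = birthGenerator ℝ n := Matrix.ext hA
  have hW' : W = binomialMatrix ℝ n := Matrix.ext hW
  have hV' : V = signedBinomialMatrix ℝ n := by
    ext i j
    rw [hV, signedBinomialMatrix, of_apply]
    split_ifs with hji
    · rw [show (i : ℕ) - j = (n - j) - (n - i) by omega]
    · rw [Nat.choose_eq_zero_of_lt (by omega), Nat.cast_zero, mul_zero]
  subst hA' hW' hV' hbQ
  rw [kronecker_one_mul_mul_kronecker_one_of_mul_eq_one _ _ _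
    (binomialMatrix_mul_signedBinomialMatrix n),
    binomialMatrix_mul_birthGenerator_mul_signedBinomialMatrix, neg_kronecker, neg_add_eq_sub]

/-- Conjugating `bQ = A ⊗ diag(λ) + I ⊗ Q` by the binomial matrices block-diagonalizes it. -/
theorem stmt_4 (d : ℕ) (hd : 1 ≤ d) (n : ℕ)
    (Q : Matrix (Fin d) (Fin d) ℝ) (l : Fin d → ℝ)
    (A : Matrix (Fin (n + 1)) (Fin (n + 1)) ℝ)
    (hA : ∀ i j : Fin (n + 1), A i j =
      if i = j then -((n - (i : ℕ) : ℕ) : ℝ)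
      else if (i : ℕ) = (j : ℕ) + 1 then ((n - (j : ℕ) : ℕ) : ℝ) else 0)
    (V W : Matrix (Fin (n + 1)) (Fin (n + 1)) ℝ)
    (hV : ∀ i j : Fin (n + 1), V i j =
      if (j : ℕ) ≤ (i : ℕ) then (-1 : ℝ) ^ ((i : ℕ) - (j : ℕ)) * (Nat.choose (n - j) (n - i)) else 0)
    (hW : ∀ i j : Fin (n + 1), W i j = (Nat.choose (n - j) (n - i) : ℝ))
    (bQ : Matrix (Fin (n + 1) × Fin d) (Fin (n + 1) × Fin d) ℝ)
    (hbQ : bQ = A ⊗ₖ Matrix.diagonal l + (1 : Matrix (Fin (n + 1)) (Fin (n + 1)) ℝ) ⊗ₖ Q) :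
    (W ⊗ₖ (1 : Matrix (Fin d) (Fin d) ℝ)) * bQ * (V ⊗ₖ (1 : Matrix (Fin d) (Fin d) ℝ)) =
      (1 : Matrix (Fin (n + 1)) (Fin (n + 1)) ℝ) ⊗ₖ Q -
        Matrix.diagonal (fun i : Fin (n + 1) => ((n - (i : ℕ) : ℕ) : ℝ)) ⊗ₖ Matrix.diagonal l :=
  stmt_4_general d n Q l A hA V W hV hW bQ hbQ
end

section
/- Let Q be a real d×d matrix and λ ∈ ℝ^d. For n ∈ ℕ, let A be the real (n+1)×(n+1) matrix with A_{ii} = −(n−i), A_{i+1,i} = n−i, other entries zero, and let 𝐐 = A ⊗ diag(λ) + I_{n+1} ⊗ Q. For t ∈ ℝ write F(t) = exp(t𝐐), and let F_{ij}(t) = (e_iᵀ ⊗ I_d)·F(t)·(e_j ⊗ I_d) denote its (i,j) d×d block, 0 ≤ i,j ≤ n. Then F_{ij}(t) = 0 whenever i < j, and for i ≥ j one has F_{ij}(t) = C(n−j, n−i) · ∑_{k=j}^{i} (−1)^{i−k} C(i−j, i−k) · exp(t(Q − (n−k)·diag(λ))). -/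
/-!
The matrix `A` is diagonalised by binomial matrices: `A = S D S⁻¹` with
`D = diag(-(n - k))`, `S i k = (-1)^(i-k) C(n-k, n-i)` and `S⁻¹ k j = C(n-j, n-k)`, the
inverse relation being the vanishing of alternating binomial sums. Hence `S ⊗ I` conjugates `𝐐`
to the block-diagonal matrix with blocks `Q - (n - k) diag λ`, whose exponential is taken
blockwise, so the `(i, j)` block of `exp (t𝐐)` is `∑ₖ S i k S⁻¹ k j exp (t (Q - (n - k) diag λ))`.
Finally `C(n-j, n-k) C(n-k, n-i) = C(n-j, n-i) C(i-j, i-k)` for `j ≤ k ≤ i`, while the product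
vanishes for the other `k`.
-/

open Kronecker NormedSpace Finset Matrix

namespace Matrix

section BlockExp

variable {ι κ : Type*} [Fintype ι] [DecidableEq ι] [Fintype κ] [DecidableEq κ]

open scoped Norms.Operator in
theorem exp_comp (M : Matrix ι ι (Matrix κ κ ℝ)) :
    exp (comp ι ι κ κ ℝ M) = comp ι ι κ κ ℝ (exp M) := by
  have hcont : Continuous (compAlgEquiv ι κ ℝ ℝ).symm := by
    show Continuous fun (M : Matrix (ι × κ) (ι × κ) ℝ) i j k l => M (i, k) (j, l)
    fun_prop
  rw [← Equiv.symm_apply_eq]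
  exact map_exp _ hcont (comp ι ι κ κ ℝ M)

open scoped Norms.Operator in
theorem exp_comp_diagonal (v : ι → Matrix κ κ ℝ) :
    exp (comp ι ι κ κ ℝ (diagonal v)) = comp ι ι κ κ ℝ (diagonal fun k => exp (v k)) := by
  rw [exp_comp, exp_diagonal]
  exact congrArg _ (congrArg diagonal (Pi.exp_def v))

omit [Fintype ι] [Fintype κ] [DecidableEq κ] in
theorem comp_diagonal_add_smul (μ : ι → ℝ) (L Q : Matrix κ κ ℝ) :
    comp ι ι κ κ ℝ (diagonal fun k => Q + μ k • L) = diagonal μ ⊗ₖ L + 1 ⊗ₖ Q := by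
  ext ⟨i, a⟩ ⟨j, b⟩
  rcases eq_or_ne i j with rfl | h
  · simp [add_comm]
  · simp [h, one_apply_ne h]

theorem comp_symm_kronecker_one_mul_comp_diagonal_mul (P P' : Matrix ι ι ℝ)
    (E : ι → Matrix κ κ ℝ) (i j : ι) :
    (comp ι ι κ κ ℝ).symm ((P ⊗ₖ (1 : Matrix κ κ ℝ)) * comp ι ι κ κ ℝ (diagonal E) * (P' ⊗ₖ 1))
      i j = ∑ k, (P i k * P' k j) • E k := by
  ext a b
  simp [mul_apply, Fintype.sum_prod_type, one_apply, diagonal_apply, sum_apply,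
    Matrix.ite_apply]
  exact sum_congr rfl fun k _ => by ring

theorem comp_symm_exp_smul_conj_kronecker_add_one_kronecker {P P' : Matrix ι ι ℝ}
    (hP : P * P' = 1) (μ : ι → ℝ) (L Q : Matrix κ κ ℝ) (t : ℝ) (i j : ι) :
    (comp ι ι κ κ ℝ).symm (exp (t • ((P * diagonal μ * P') ⊗ₖ L + 1 ⊗ₖ Q))) i j =
      ∑ k, (P i k * P' k j) • exp (t • (Q + μ k • L)) := by
  have hU : (P ⊗ₖ (1 : Matrix κ κ ℝ)) * (P' ⊗ₖ 1) = 1 := by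
    rw [← mul_kronecker_mul, hP, Matrix.one_mul, one_kronecker_one]
  have hconj : t • ((P * diagonal μ * P') ⊗ₖ L + 1 ⊗ₖ Q) =
      (P ⊗ₖ 1) * comp ι ι κ κ ℝ (diagonal fun k => t • (Q + μ k • L)) * (P' ⊗ₖ 1) := by
    rw [show (fun k => t • (Q + μ k • L)) = t • fun k => Q + μ k • L from rfl, diagonal_smul,
      ← compLinearEquiv_apply _ _ _ _ _ ℝ, LinearEquiv.map_smul, compLinearEquiv_apply,
      comp_diagonal_add_smul, Matrix.mul_smul, Matrix.smul_mul, Matrix.mul_add, Matrix.add_mul,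
      ← mul_kronecker_mul, ← mul_kronecker_mul, ← mul_kronecker_mul, ← mul_kronecker_mul]
    simp only [Matrix.one_mul, Matrix.mul_one, hP]
  rw [hconj, ← inv_eq_right_inv hU, exp_conj _ _ (.of_mul_eq_one _ hU), inv_eq_right_inv hU,
    exp_comp_diagonal, comp_symm_kronecker_one_mul_comp_diagonal_mul]

end BlockExp

end Matrix

theorem Nat.choose_mul_choose_sub_sub {n i j k : ℕ} (hjk : j ≤ k) (hki : k ≤ i) (hin : i ≤ n) :
    (n - j).choose (n - k) * (n - k).choose (n - i) =
      (n - j).choose (n - i) * (i - j).choose (i - k) := by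
  rw [Nat.choose_mul (by omega), show n - j - (n - i) = i - j by omega,
    show n - k - (n - i) = i - k by omega]

theorem Nat.mul_choose_sub_one_add_mul_choose (N r : ℕ) :
    N * (N - 1).choose r + r * N.choose r = N * N.choose r := by
  rcases N with _ | M
  · cases r <;> simp
  rcases le_or_gt r (M + 1) with h | h
  · rw [Nat.add_sub_cancel, mul_comm, Nat.choose_mul_succ_eq, mul_comm r, ← mul_add,
      Nat.sub_add_cancel h, mul_comm]
  · simp [Nat.choose_eq_zero_of_lt h, Nat.choose_eq_zero_of_lt (show M < r by omega)]

theorem Finset.sum_Icc_neg_one_pow_mul_choose {R : Type*} [CommRing R] {i j : ℕ} (h : j < i) :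
    ∑ k ∈ Icc j i, (-1 : R) ^ (i - k) * ((i - j).choose (i - k) : R) = 0 := by
  rw [← Ico_add_one_right_eq_Icc,
    sum_Ico_reflect (fun m => (-1 : R) ^ m * ((i - j).choose m : R)) j le_rfl,
    Nat.sub_self, Nat.Ico_zero_eq_range, show i + 1 - j = i - j + 1 by omega]
  simpa using congrArg (Int.cast : ℤ → R)
    (Int.alternating_sum_range_choose_of_ne (show i - j ≠ 0 by omega))

namespace Matrix

variable (R : Type*) [CommRing R] (n : ℕ)

/-- Transposed generator of the pure death process of `n` units, indexed by the number of deaths. -/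
def deathGenerator : Matrix (Fin (n + 1)) (Fin (n + 1)) R :=
  of fun i j => if i = j then -((n - (i : ℕ) : ℕ) : R)
    else if (i : ℕ) = (j : ℕ) + 1 then ((n - (j : ℕ) : ℕ) : R) else 0

def binomialMatrix : Matrix (Fin (n + 1)) (Fin (n + 1)) R :=
  of fun k j => ((n - j).choose (n - k) : R)

/-- Lower triangular: for `i < k` the sign is a junk value but `C(n-k, n-i) = 0`. -/
def signedBinomialMatrix : Matrix (Fin (n + 1)) (Fin (n + 1)) R :=
  of fun i k => (-1) ^ ((i : ℕ) - k) * ((n - k).choose (n - i) : R)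

theorem sum_signedBinomialMatrix_mul_binomialMatrix_smul {M : Type*} [AddCommGroup M]
    [Module R M] (f : ℕ → M) (i j : Fin (n + 1)) :
    ∑ k : Fin (n + 1), (signedBinomialMatrix R n i k * binomialMatrix R n k j) • f k =
      ((n - j).choose (n - i) : R) •
        ∑ k ∈ Icc (j : ℕ) i, ((-1) ^ ((i : ℕ) - k) * (((i : ℕ) - j).choose (i - k) : R)) • f k := by
  let g (k : ℕ) : M :=
    ((-1) ^ ((i : ℕ) - k) * ((n - k).choose (n - i) : R) * ((n - j).choose (n - k) : R)) • f k
  calc ∑ k : Fin (n + 1), (signedBinomialMatrix R n i k * binomialMatrix R n k j) • f k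
      = ∑ k ∈ range (n + 1), g k := Fin.sum_univ_eq_sum_range g (n + 1)
    _ = ∑ k ∈ Icc (j : ℕ) i, g k := by
      refine (sum_subset (fun k hk => ?_) (fun k hk hk' => ?_)).symm
      · simp only [mem_Icc, mem_range] at hk ⊢
        omega
      · simp only [mem_Icc, mem_range, not_and_or, not_le] at hk hk'
        rcases hk' with hk' | hk'
        · simp [g, Nat.choose_eq_zero_of_lt (show n - j < n - k by omega)]
        · simp [g, Nat.choose_eq_zero_of_lt (show n - k < n - i by omega)]
    _ = _ := by
      rw [smul_sum]
      refine sum_congr rfl fun k hk => ?_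
      rw [mem_Icc] at hk
      have hc := congrArg (Nat.cast : ℕ → R) (Nat.choose_mul_choose_sub_sub hk.1 hk.2 i.is_le)
      push_cast at hc
      rw [smul_smul]
      exact congrArg (· • f k) (by linear_combination (-1 : R) ^ ((i : ℕ) - k) * hc)

theorem signedBinomialMatrix_mul_binomialMatrix :
    signedBinomialMatrix R n * binomialMatrix R n = 1 := by
  ext i j
  have hsum := sum_signedBinomialMatrix_mul_binomialMatrix_smul R n (fun _ => (1 : R)) i j
  simp only [smul_eq_mul, mul_one] at hsum
  rw [mul_apply, hsum]
  rcases lt_trichotomy (i : ℕ) j with h | h | h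
  · rw [Icc_eq_empty (by omega), sum_empty, mul_zero, one_apply_ne (by omega)]
  · rw [Fin.ext h, one_apply_eq, Icc_self, sum_singleton]
    simp
  · rw [sum_Icc_neg_one_pow_mul_choose h, mul_zero, one_apply_ne (by omega)]

theorem binomialMatrix_mul_deathGenerator :
    binomialMatrix R n * deathGenerator R n =
      diagonal (fun k : Fin (n + 1) => -((n - k : ℕ) : R)) * binomialMatrix R n := by
  ext k j
  have hterm : ∀ m : Fin (n + 1), binomialMatrix R n k m * deathGenerator R n m j =
      (if m = j then -((n - j : ℕ) : R) * binomialMatrix R n k j else 0) +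
        if (m : ℕ) = j + 1 then ((n - j : ℕ) : R) * ((n - m).choose (n - k) : R) else 0 := by
    intro m
    simp only [binomialMatrix, deathGenerator, of_apply]
    split_ifs with h1 h2 h2 <;> first | omega | (subst h1; ring) | ring
  have hsubdiag : ∑ m : Fin (n + 1),
      (if (m : ℕ) = j + 1 then ((n - j : ℕ) : R) * ((n - m).choose (n - k) : R) else 0) =
        ((n - j : ℕ) : R) * ((n - j - 1).choose (n - k) : R) := by
    rw [Fin.sum_univ_eq_sum_range
      (fun m => if m = j + 1 then ((n - j : ℕ) : R) * ((n - m).choose (n - k) : R) else 0),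
      sum_ite_eq']
    split_ifs with h
    · rw [Nat.sub_sub]
    · simp [show n - j = 0 by simp only [mem_range] at h; omega]
  have hc := congrArg (Nat.cast : ℕ → R) (Nat.mul_choose_sub_one_add_mul_choose (n - j) (n - k))
  push_cast at hc
  rw [mul_apply, sum_congr rfl fun m _ => hterm m, sum_add_distrib, sum_ite_eq',
    if_pos (mem_univ _), hsubdiag, diagonal_mul]
  simp only [binomialMatrix, of_apply]
  linear_combination hc

theorem deathGenerator_eq_conj :
    deathGenerator R n = signedBinomialMatrix R n *
      diagonal (fun k : Fin (n + 1) => -((n - k : ℕ) : R)) * binomialMatrix R n := by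
  calc deathGenerator R n
      = signedBinomialMatrix R n * binomialMatrix R n * deathGenerator R n := by
        rw [signedBinomialMatrix_mul_binomialMatrix, Matrix.one_mul]
    _ = _ := by rw [Matrix.mul_assoc, binomialMatrix_mul_deathGenerator, Matrix.mul_assoc]

end Matrix

theorem stmt_5_general (d : ℕ) (n : ℕ)
    (Q : Matrix (Fin d) (Fin d) ℝ) (l : Fin d → ℝ)
    (A : Matrix (Fin (n + 1)) (Fin (n + 1)) ℝ)
    (hA : ∀ i j : Fin (n + 1), A i j =
      if i = j then -((n - (i : ℕ) : ℕ) : ℝ)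
      else if (i : ℕ) = (j : ℕ) + 1 then ((n - (j : ℕ) : ℕ) : ℝ) else 0)
    (bQ : Matrix (Fin (n + 1) × Fin d) (Fin (n + 1) × Fin d) ℝ)
    (hbQ : bQ = A ⊗ₖ Matrix.diagonal l + (1 : Matrix (Fin (n + 1)) (Fin (n + 1)) ℝ) ⊗ₖ Q)
    (t : ℝ) (i j : Fin (n + 1)) :
    ((i : ℕ) < (j : ℕ) →
      (Matrix.of fun a b : Fin d => exp (t • bQ) (i, a) (j, b)) = 0) ∧
    ((j : ℕ) ≤ (i : ℕ) →
      (Matrix.of fun a b : Fin d => exp (t • bQ) (i, a) (j, b)) =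
        ((Nat.choose (n - j) (n - i) : ℝ)) •
          ∑ k ∈ Finset.Icc (j : ℕ) (i : ℕ),
            ((-1 : ℝ) ^ ((i : ℕ) - k) * (Nat.choose ((i : ℕ) - (j : ℕ)) ((i : ℕ) - k) : ℝ)) •
              exp (t • (Q - ((n - k : ℕ) : ℝ) • Matrix.diagonal l))) := by
  have hA' : deathGenerator ℝ n = A := (Matrix.ext hA).symm
  have hblock := comp_symm_exp_smul_conj_kronecker_add_one_kronecker
    (signedBinomialMatrix_mul_binomialMatrix ℝ n) (fun k => -((n - k : ℕ) : ℝ)) (diagonal l) Q t i j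
  simp only [neg_smul, ← sub_eq_add_neg] at hblock
  rw [← deathGenerator_eq_conj, hA', ← hbQ, sum_signedBinomialMatrix_mul_binomialMatrix_smul ℝ n
    (fun k => exp (t • (Q - ((n - k : ℕ) : ℝ) • diagonal l)))] at hblock
  refine ⟨fun hij => hblock.trans ?_, fun _ => hblock⟩
  rw [Icc_eq_empty (by omega), sum_empty, smul_zero]

/-- Explicit formula for the `d×d` blocks of `exp(t𝐐)`, `𝐐 = A ⊗ diag(λ) + I ⊗ Q`. -/
theorem stmt_5 (d : ℕ) (hd : 1 ≤ d) (n : ℕ)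
    (Q : Matrix (Fin d) (Fin d) ℝ) (l : Fin d → ℝ)
    (A : Matrix (Fin (n + 1)) (Fin (n + 1)) ℝ)
    (hA : ∀ i j : Fin (n + 1), A i j =
      if i = j then -((n - (i : ℕ) : ℕ) : ℝ)
      else if (i : ℕ) = (j : ℕ) + 1 then ((n - (j : ℕ) : ℕ) : ℝ) else 0)
    (bQ : Matrix (Fin (n + 1) × Fin d) (Fin (n + 1) × Fin d) ℝ)
    (hbQ : bQ = A ⊗ₖ Matrix.diagonal l + (1 : Matrix (Fin (n + 1)) (Fin (n + 1)) ℝ) ⊗ₖ Q)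
    (t : ℝ) (i j : Fin (n + 1)) :
    ((i : ℕ) < (j : ℕ) →
      (Matrix.of fun a b : Fin d => exp (t • bQ) (i, a) (j, b)) = 0) ∧
    ((j : ℕ) ≤ (i : ℕ) →
      (Matrix.of fun a b : Fin d => exp (t • bQ) (i, a) (j, b)) =
        ((Nat.choose (n - j) (n - i) : ℝ)) •
          ∑ k ∈ Finset.Icc (j : ℕ) (i : ℕ),
            ((-1 : ℝ) ^ ((i : ℕ) - k) * (Nat.choose ((i : ℕ) - (j : ℕ)) ((i : ℕ) - k) : ℝ)) •
              exp (t • (Q - ((n - k : ℕ) : ℝ) • Matrix.diagonal l))) :=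
  stmt_5_general d n Q l A hA bQ hbQ t i j
end

section
/- Let Q be a real d×d matrix, λ ∈ ℝ^d, n ∈ ℕ, and x(0) ∈ ℝ^d. Let A be the real (n+1)×(n+1) matrix with A_{ii} = −(n−i), A_{i+1,i} = n−i, other entries zero, and let 𝐐 = A ⊗ diag(λ) + I_{n+1} ⊗ Q. Define π(t) = exp(t𝐐)·(e_0 ⊗ x(0)) ∈ ℝ^{(n+1)d}, with components π^i(t) = (e_iᵀ ⊗ I_d)·π(t) ∈ ℝ^d for 0 ≤ i ≤ n. Then for every t ∈ ℝ and 0 ≤ i ≤ n, π^i(t) = C(n,i) · ∑_{k=0}^{i} (−1)^{i−k} C(i,k) · exp(t(Q − (n−k)·diag(λ))) · x(0). -/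
/-!
The generator `A` is lower bidiagonal with eigenvalues `-(n - k)`, and the matrix `M` with
entries `C(n,i) (-1)^(i-k) C(i,k)` satisfies `A M = M diag(-(n - k))`. Conjugating by `M ⊗ I`
therefore turns `𝐐` into the block-diagonal matrix with blocks `Q - (n - k) diag(λ)`, whose
exponential is computed block by block. Since the rows of `M` sum to `e₀` (alternating binomial
sums), `e₀ ⊗ x(0) = (M ⊗ I) (𝟙 ⊗ x(0))`, and hence
`π^i(t) = ∑ₖ M_{ik} exp(t (Q - (n - k) diag(λ))) x(0)`.
-/

open Kronecker NormedSpace Matrix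

namespace Matrix

variable {ι m n 𝔸 : Type*}

section Exp

variable [Fintype m] [DecidableEq m] [RCLike 𝔸]

open scoped Norms.Operator in
theorem exp_reindex [Fintype n] [DecidableEq n] (e : m ≃ n) (A : Matrix m m 𝔸) :
    exp (reindex e e A) = reindex e e (exp A) :=
  (map_exp (reindexAlgEquiv ℚ 𝔸 e) (continuous_id.matrix_submatrix _ _) A).symm

open scoped Norms.Operator in
theorem exp_blockDiagonal_eq [Fintype ι] [DecidableEq ι] (B : ι → Matrix m m 𝔸) :
    exp (blockDiagonal B) = blockDiagonal fun k => exp (B k) := by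
  rw [exp_blockDiagonal]
  exact congrArg _
    (@Pi.exp_def ι (fun _ => Matrix m m 𝔸) _ _ _ (fun _ => FiniteDimensional.complete 𝔸 _) B)

end Exp

theorem exp_mul_eq_mul_exp_of_mul_eq [Fintype m] [DecidableEq m] [NormedCommRing 𝔸]
    [NormedAlgebra ℚ 𝔸] [CompleteSpace 𝔸] {B U D : Matrix m m 𝔸} (hU : IsUnit U)
    (h : B * U = U * D) : exp B * U = U * exp D := by
  have hU' := (isUnit_iff_isUnit_det U).mp hU
  have hB : B = U * D * U⁻¹ := by rw [← h, mul_assoc, mul_nonsing_inv _ hU', mul_one]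
  rw [hB, exp_conj U D hU, mul_assoc, nonsing_inv_mul _ hU', mul_one]

theorem reindex_blockDiagonal_mulVec [Fintype ι] [DecidableEq ι] [Fintype m]
    [NonUnitalNonAssocSemiring 𝔸] (B : ι → Matrix m m 𝔸) (v : ι × m → 𝔸) :
    reindex (Equiv.prodComm m ι) (Equiv.prodComm m ι) (blockDiagonal B) *ᵥ v =
      fun p => (B p.1 *ᵥ fun b => v (p.1, b)) p.2 := by
  ext ⟨k, a⟩
  simp [mulVec, dotProduct, Fintype.sum_prod_type, blockDiagonal_apply, ite_mul]

theorem kronecker_one_mulVec [Fintype ι] [Fintype m] [DecidableEq m] [NonAssocSemiring 𝔸]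
    (M : Matrix ι ι 𝔸) (v : ι × m → 𝔸) :
    (M ⊗ₖ (1 : Matrix m m 𝔸)) *ᵥ v = fun p => (M *ᵥ fun k => v (k, p.2)) p.1 := by
  ext ⟨i, a⟩
  simp [mulVec, dotProduct, Fintype.sum_prod_type, one_apply, mul_ite]

theorem diagonal_kronecker_add_one_kronecker [DecidableEq ι] [CommSemiring 𝔸] (δ : ι → 𝔸)
    (P Q : Matrix m m 𝔸) :
    diagonal δ ⊗ₖ P + (1 : Matrix ι ι 𝔸) ⊗ₖ Q =
      reindex (Equiv.prodComm m ι) (Equiv.prodComm m ι) (blockDiagonal fun k => δ k • P + Q) := by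
  ext ⟨i, a⟩ ⟨j, b⟩
  simp [diagonal_kronecker, one_kronecker, blockDiagonal_apply, ite_add_ite]

theorem kronecker_mul_kronecker_one_of_mul_eq [Fintype ι] [DecidableEq ι] [Fintype m]
    [DecidableEq m] [CommSemiring 𝔸] {A M D : Matrix ι ι 𝔸} (h : A * M = M * D)
    (P Q : Matrix m m 𝔸) :
    (A ⊗ₖ P + 1 ⊗ₖ Q) * (M ⊗ₖ 1) = (M ⊗ₖ 1) * (D ⊗ₖ P + 1 ⊗ₖ Q) := by
  simp only [add_mul, mul_add, ← mul_kronecker_mul, h, one_mul, mul_one]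

end Matrix

theorem Nat.sub_mul_choose_mul_choose (n m j : ℕ) :
    (n - m) * n.choose m * m.choose j = (m + 1 - j) * n.choose (m + 1) * (m + 1).choose j :=
  calc (n - m) * n.choose m * m.choose j = n.choose (m + 1) * ((m + 1) * m.choose j) := by
        rw [← mul_assoc, Nat.choose_succ_right_eq]; ring
    _ = n.choose (m + 1) * ((m + 1).choose (j + 1) * (j + 1)) := by
        rw [Nat.add_one_mul_choose_eq]
    _ = (m + 1 - j) * n.choose (m + 1) * (m + 1).choose j := by
        rw [Nat.choose_succ_right_eq]; ring

theorem sub_mul_choose_mul_neg_one_pow_mul_choose (n m j : ℕ) :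
    ((n : ℝ) - m) * (n.choose m * ((-1) ^ (m - j) * m.choose j)) =
      ((j : ℝ) - (m + 1)) * (n.choose (m + 1) * ((-1) ^ (m + 1 - j) * (m + 1).choose j)) := by
  rcases lt_or_ge m j with hmj | hjm
  · rcases (Nat.succ_le_of_lt hmj).eq_or_lt with rfl | hj
    · simp
    · simp [Nat.choose_eq_zero_of_lt hmj, Nat.choose_eq_zero_of_lt hj]
  rcases lt_or_ge n m with hnm | hmn
  · simp [Nat.choose_eq_zero_of_lt hnm, Nat.choose_eq_zero_of_lt (hnm.trans m.lt_succ_self)]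
  have key := congrArg (Nat.cast : ℕ → ℝ) (Nat.sub_mul_choose_mul_choose n m j)
  push_cast [Nat.cast_sub hmn, Nat.cast_sub (hjm.trans m.le_succ)] at key
  rw [show m + 1 - j = m - j + 1 by omega, pow_succ]
  linear_combination (-1 : ℝ) ^ (m - j) * key

def pureBirthGenerator (n : ℕ) : Matrix (Fin (n + 1)) (Fin (n + 1)) ℝ :=
  of fun i j => if i = j then -((n - (i : ℕ) : ℕ) : ℝ)
    else if (i : ℕ) = (j : ℕ) + 1 then ((n - (j : ℕ) : ℕ) : ℝ) else 0

def pureBirthEigenvectors (n : ℕ) : Matrix (Fin (n + 1)) (Fin (n + 1)) ℝ :=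
  of fun i k => (n.choose i : ℝ) * ((-1) ^ ((i : ℕ) - k) * ((i : ℕ).choose k : ℝ))

theorem pureBirthGenerator_mul_eigenvectors (n : ℕ) :
    pureBirthGenerator n * pureBirthEigenvectors n =
      pureBirthEigenvectors n * diagonal fun k : Fin (n + 1) => -((n - (k : ℕ) : ℕ) : ℝ) := by
  ext i j
  rw [mul_diagonal, mul_apply]
  induction i using Fin.cases with
  | zero =>
    rw [Fintype.sum_eq_single 0 fun k hk => by simp [pureBirthGenerator, Ne.symm hk]]
    rcases eq_or_ne j 0 with rfl | hj
    · simp [pureBirthGenerator, mul_comm]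
    · have h0 : Nat.choose 0 j = 0 := Nat.choose_eq_zero_of_lt (Fin.pos_of_ne_zero hj)
      simp [pureBirthEigenvectors, h0]
  | succ m =>
    rw [Fintype.sum_eq_add m.succ m.castSucc Fin.castSucc_lt_succ.ne' fun k hk => by
      have hkm : (m : ℕ) ≠ k := fun h => hk.2 (Fin.ext h.symm)
      simp [pureBirthGenerator, Ne.symm hk.1, hkm]]
    simp only [pureBirthGenerator, pureBirthEigenvectors, of_apply, Fin.val_succ,
      Fin.val_castSucc, if_pos, if_neg Fin.castSucc_lt_succ.ne']
    rw [Nat.cast_sub m.isLt, Nat.cast_sub m.is_le', Nat.cast_sub (Nat.lt_succ_iff.mp j.isLt)]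
    push_cast
    linear_combination sub_mul_choose_mul_neg_one_pow_mul_choose n m j

theorem isUnit_pureBirthEigenvectors (n : ℕ) : IsUnit (pureBirthEigenvectors n) := by
  have hlower : (pureBirthEigenvectors n).IsLowerTriangular := fun i k hik => by
    simp [pureBirthEigenvectors, Nat.choose_eq_zero_of_lt (show (i : ℕ) < k from hik)]
  rw [isUnit_iff_isUnit_det, det_of_isLowerTriangular _ hlower, isUnit_iff_ne_zero]
  refine Finset.prod_ne_zero_iff.mpr fun i _ => ?_
  simp [pureBirthEigenvectors, Nat.choose_ne_zero (Nat.lt_succ_iff.mp i.isLt)]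

theorem sum_pureBirthEigenvectors_smul {V : Type*} [AddCommGroup V] [Module ℝ V] {n : ℕ}
    (i : Fin (n + 1)) (f : ℕ → V) :
    ∑ k : Fin (n + 1), pureBirthEigenvectors n i k • f k =
      (n.choose i : ℝ) •
        ∑ k ∈ Finset.range (i + 1), ((-1) ^ ((i : ℕ) - k) * ((i : ℕ).choose k : ℝ)) • f k := by
  simp only [pureBirthEigenvectors, of_apply]
  rw [Fin.sum_univ_eq_sum_range
      (fun k => ((n.choose i : ℝ) * ((-1) ^ ((i : ℕ) - k) * ((i : ℕ).choose k : ℝ))) • f k),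
    ← Finset.sum_subset (Finset.range_subset_range.mpr i.isLt) fun k _ hk => ?_, Finset.smul_sum]
  · simp only [mul_smul]
  · simp [Nat.choose_eq_zero_of_lt (Finset.mem_range_succ_iff.not.mp hk |> Nat.lt_of_not_le)]

theorem pureBirthEigenvectors_mulVec_const (n : ℕ) (c : ℝ) :
    pureBirthEigenvectors n *ᵥ (fun _ => c) = fun i => if i = 0 then c else 0 := by
  ext i
  have halt : ∑ k ∈ Finset.range (i + 1), (-1 : ℝ) ^ ((i : ℕ) - k) * ((i : ℕ).choose k : ℝ) =
      0 ^ (i : ℕ) := by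
    simpa using (add_pow (1 : ℝ) (-1) i).symm
  change ∑ k, pureBirthEigenvectors n i k • c = _
  rw [sum_pureBirthEigenvectors_smul i fun _ => c, ← Finset.sum_smul, halt]
  rcases eq_or_ne i 0 with rfl | hi
  · simp
  · simp [hi, Fin.val_ne_zero_iff.mpr hi]

theorem stmt_6_general (d : ℕ) (n : ℕ)
    (Q : Matrix (Fin d) (Fin d) ℝ) (l : Fin d → ℝ) (x0 : Fin d → ℝ)
    (A : Matrix (Fin (n + 1)) (Fin (n + 1)) ℝ)
    (hA : ∀ i j : Fin (n + 1), A i j =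
      if i = j then -((n - (i : ℕ) : ℕ) : ℝ)
      else if (i : ℕ) = (j : ℕ) + 1 then ((n - (j : ℕ) : ℕ) : ℝ) else 0)
    (bQ : Matrix (Fin (n + 1) × Fin d) (Fin (n + 1) × Fin d) ℝ)
    (hbQ : bQ = A ⊗ₖ Matrix.diagonal l + (1 : Matrix (Fin (n + 1)) (Fin (n + 1)) ℝ) ⊗ₖ Q)
    (v0 : Fin (n + 1) × Fin d → ℝ)
    (hv0 : v0 = fun p => if p.1 = 0 then x0 p.2 else 0)
    (t : ℝ) (i : Fin (n + 1)) :
    (fun a : Fin d => (exp (t • bQ) *ᵥ v0) (i, a)) =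
      ((Nat.choose n i : ℝ)) •
        ∑ k ∈ Finset.range ((i : ℕ) + 1),
          ((-1 : ℝ) ^ ((i : ℕ) - k) * (Nat.choose (i : ℕ) k : ℝ)) •
            (exp (t • (Q - ((n - k : ℕ) : ℝ) • Matrix.diagonal l)) *ᵥ x0) := by
  have hgen : A = pureBirthGenerator n := Matrix.ext hA
  set M := pureBirthEigenvectors n ⊗ₖ (1 : Matrix (Fin d) (Fin d) ℝ) with hM
  set bD := diagonal (fun k : Fin (n + 1) => -((n - (k : ℕ) : ℕ) : ℝ)) ⊗ₖ diagonal l +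
    (1 : Matrix (Fin (n + 1)) (Fin (n + 1)) ℝ) ⊗ₖ Q with hbD
  have hU : IsUnit M := by
    rw [isUnit_iff_isUnit_det, det_kronecker, det_one, one_pow, mul_one]
    exact ((isUnit_iff_isUnit_det _).mp (isUnit_pureBirthEigenvectors n)).pow _
  have hconj : t • bQ * M = M * (t • bD) := by
    rw [Matrix.smul_mul, Matrix.mul_smul, hbQ, hgen, hM, hbD,
      kronecker_mul_kronecker_one_of_mul_eq (pureBirthGenerator_mul_eigenvectors n)]
  have hinit : v0 = M *ᵥ fun p => x0 p.2 := by
    rw [hv0, kronecker_one_mulVec]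
    ext ⟨k, a⟩
    simp [pureBirthEigenvectors_mulVec_const]
  have hblocks : t • bD = reindex (Equiv.prodComm _ _) (Equiv.prodComm _ _)
      (blockDiagonal fun k : Fin (n + 1) => t • (Q - ((n - k : ℕ) : ℝ) • diagonal l)) := by
    rw [hbD, diagonal_kronecker_add_one_kronecker]
    ext ⟨j, a⟩ ⟨k, b⟩
    simp [blockDiagonal_apply, neg_add_eq_sub]
  rw [hinit, mulVec_mulVec, exp_mul_eq_mul_exp_of_mul_eq hU hconj, ← mulVec_mulVec, hblocks,
    exp_reindex, exp_blockDiagonal_eq, reindex_blockDiagonal_mulVec, kronecker_one_mulVec,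
    ← sum_pureBirthEigenvectors_smul i fun k : ℕ =>
      exp (t • (Q - ((n - k : ℕ) : ℝ) • diagonal l)) *ᵥ x0]
  ext a
  simp [mulVec, dotProduct, Finset.sum_apply]

/-- Explicit solution `π^i(t)` of the forward ODE `π̇ = 𝐐 π`, `π(0) = e₀ ⊗ x(0)`. -/
theorem stmt_6 (d : ℕ) (hd : 1 ≤ d) (n : ℕ)
    (Q : Matrix (Fin d) (Fin d) ℝ) (l : Fin d → ℝ) (x0 : Fin d → ℝ)
    (A : Matrix (Fin (n + 1)) (Fin (n + 1)) ℝ)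
    (hA : ∀ i j : Fin (n + 1), A i j =
      if i = j then -((n - (i : ℕ) : ℕ) : ℝ)
      else if (i : ℕ) = (j : ℕ) + 1 then ((n - (j : ℕ) : ℕ) : ℝ) else 0)
    (bQ : Matrix (Fin (n + 1) × Fin d) (Fin (n + 1) × Fin d) ℝ)
    (hbQ : bQ = A ⊗ₖ Matrix.diagonal l + (1 : Matrix (Fin (n + 1)) (Fin (n + 1)) ℝ) ⊗ₖ Q)
    (v0 : Fin (n + 1) × Fin d → ℝ)
    (hv0 : v0 = fun p => if p.1 = 0 then x0 p.2 else 0)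
    (t : ℝ) (i : Fin (n + 1)) :
    (fun a : Fin d => (exp (t • bQ) *ᵥ v0) (i, a)) =
      ((Nat.choose n i : ℝ)) •
        ∑ k ∈ Finset.range ((i : ℕ) + 1),
          ((-1 : ℝ) ^ ((i : ℕ) - k) * (Nat.choose (i : ℕ) k : ℝ)) •
            (exp (t • (Q - ((n - k : ℕ) : ℝ) • Matrix.diagonal l)) *ᵥ x0) :=
  stmt_6_general d n Q l x0 A hA bQ hbQ v0 hv0 t i
end

section
/- Let Q be a real d×d matrix whose off-diagonal entries are nonnegative, whose columns each sum to zero, and whose rank equals d − 1, and let π ∈ ℝ^d satisfy Qπ = 0, π_i > 0 for all i, and ∑_i π_i = 1. Let λ ∈ ℝ^d have all entries strictly positive and set λ_∞ = ∑_i λ_i π_i. Then, as α → ∞ along the reals, the inverse matrices (αQ − diag(λ))^{−1} converge to −(1/λ_∞) · π 1ᵀ. -/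
open Matrix Filter Topology

/-!
Put `ε = α⁻¹` and fix an index `i₀`. Multiplying `αQ - diag λ` on the left by `B ε`, the matrix
`ε • 1` with row `i₀` replaced by `-1ᵀ`, gives `N ε`, the matrix `Q - ε • diag λ` with row `i₀`
replaced by `λᵀ` (since `1ᵀQ = 0`). Hence `(αQ - diag λ)⁻¹ = (N ε)⁻¹ * B ε`, and both factors are
continuous at `ε = 0`: `N 0` is invertible because `ker Q = ℝπ` and `λᵀπ = λ_∞ ≠ 0`. The limit is
`(N 0)⁻¹ * B 0 = -π1ᵀ / λ_∞`, because `N 0 π = λ_∞ e_{i₀}`.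
-/

namespace Matrix

variable {n K : Type*} [Fintype n] [Field K]

theorem exists_eq_smul_of_mulVec_eq_zero {Q : Matrix n n K} (hrank : Q.rank = Fintype.card n - 1)
    {π : n → K} (hπ : Q *ᵥ π = 0) (hπ0 : π ≠ 0) {v : n → K} (hv : Q *ᵥ v = 0) :
    ∃ t : K, v = t • π := by
  have hker_le : K ∙ π ≤ LinearMap.ker Q.mulVecLin := by
    rwa [Submodule.span_singleton_le_iff_mem, LinearMap.mem_ker, mulVecLin_apply]
  have hker_finrank : Module.finrank K (LinearMap.ker Q.mulVecLin) ≤ 1 := by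
    have := LinearMap.finrank_range_add_finrank_ker Q.mulVecLin
    rw [Module.finrank_fintype_fun_eq_card] at this
    have : Q.rank = Module.finrank K (LinearMap.range Q.mulVecLin) := rfl
    omega
  have hker : K ∙ π = LinearMap.ker Q.mulVecLin :=
    Submodule.eq_of_le_of_finrank_le hker_le (by rwa [finrank_span_singleton hπ0])
  obtain ⟨t, ht⟩ := Submodule.mem_span_singleton.mp (hker ▸ hv : v ∈ K ∙ π)
  exact ⟨t, ht.symm⟩

theorem mulVec_eq_zero_of_updateRow_mulVec_eq_zero {R : Type*} [CommSemiring R] [DecidableEq n]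
    {Q : Matrix n n R} (hQ : 1 ᵥ* Q = 0) {i₀ : n} {r v : n → R} (hv : Q.updateRow i₀ r *ᵥ v = 0) : Q *ᵥ v = 0 := by
  have hne : ∀ i ≠ i₀, (Q *ᵥ v) i = 0 := fun i hi => by
    simpa [updateRow_mulVec, hi] using congrFun hv i
  have hsum : ∑ i, (Q *ᵥ v) i = 0 := by
    simpa [dotProduct_mulVec, hQ] using (one_dotProduct (Q *ᵥ v)).symm
  have hi₀ : (Q *ᵥ v) i₀ = 0 := by
    rwa [Finset.sum_eq_single i₀ (fun i _ hi => hne i hi) (by simp)] at hsum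
  funext i
  by_cases hi : i = i₀
  · subst hi; exact hi₀
  · exact hne i hi

theorem det_updateRow_ne_zero [DecidableEq n] {Q : Matrix n n K} (hQ : 1 ᵥ* Q = 0) {π : n → K}
    (hker : ∀ v, Q *ᵥ v = 0 → ∃ t : K, v = t • π) (i₀ : n) {r : n → K} (hr : r ⬝ᵥ π ≠ 0) :
    (Q.updateRow i₀ r).det ≠ 0 := by
  intro hdet
  obtain ⟨v, hv0, hv⟩ := exists_mulVec_eq_zero_iff.mpr hdet
  obtain ⟨t, rfl⟩ := hker v (mulVec_eq_zero_of_updateRow_mulVec_eq_zero hQ hv)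
  have htr : t * (r ⬝ᵥ π) = 0 := by
    simpa [updateRow_mulVec, dotProduct_smul] using congrFun hv i₀
  have ht : t = 0 := (mul_eq_zero.mp htr).resolve_right hr
  simp [ht] at hv0

theorem updateRow_smul_one_mul_smul_sub_diagonal [DecidableEq n] {Q : Matrix n n K}
    (hQ : 1 ᵥ* Q = 0) (i₀ : n) (l : n → K) {α : K} (hα : α ≠ 0) :
    (α⁻¹ • (1 : Matrix n n K)).updateRow i₀ (-1) * (α • Q - diagonal l) =
      (Q - α⁻¹ • diagonal l).updateRow i₀ l := by
  rw [updateRow_mul, smul_mul, one_mul, smul_sub, smul_smul, inv_mul_cancel₀ hα, one_smul]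
  congr 1
  ext j
  simp [vecMul_sub, vecMul_smul, neg_vecMul, hQ, vecMul_diagonal]

theorem updateRow_mul_smul_of_mulVec_eq_zero [DecidableEq n] {Q : Matrix n n K} {π : n → K}
    (hπ : Q *ᵥ π = 0) (i₀ : n) (l : n → K) (hlπ : l ⬝ᵥ π ≠ 0) :
    Q.updateRow i₀ l * (-(l ⬝ᵥ π)⁻¹ • of fun i _ => π i) = (0 : Matrix n n K).updateRow i₀ (-1) := by
  rw [updateRow_mul]
  ext i j
  by_cases hi : i = i₀
  · subst hi
    simp only [updateRow_self, vecMul, dotProduct] at hlπ ⊢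
    simp [mul_left_comm (l _), ← Finset.mul_sum, hlπ]
  · have := congrFun hπ i
    simp only [mulVec, dotProduct, Pi.zero_apply] at this
    simp [hi, mul_apply, mul_left_comm _ (l ⬝ᵥ π)⁻¹, ← Finset.mul_sum, this]

theorem tendsto_inv_smul_sub_diagonal [DecidableEq n] [Nonempty n]
    {Q : Matrix n n ℝ} (hQ : 1 ᵥ* Q = 0) {π : n → ℝ} (hπ : Q *ᵥ π = 0)
    (hker : ∀ v, Q *ᵥ v = 0 → ∃ t : ℝ, v = t • π) {l : n → ℝ} (hlπ : l ⬝ᵥ π ≠ 0) :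
    Tendsto (fun α : ℝ => (α • Q - diagonal l)⁻¹) atTop
      (𝓝 (-(l ⬝ᵥ π)⁻¹ • of fun i _ => π i)) := by
  obtain ⟨i₀⟩ := ‹Nonempty n›
  set N : ℝ → Matrix n n ℝ := fun ε => (Q - ε • diagonal l).updateRow i₀ l
  set B : ℝ → Matrix n n ℝ := fun ε => (ε • (1 : Matrix n n ℝ)).updateRow i₀ (-1)
  have hN : Continuous N := by fun_prop
  have hB : Continuous B := by fun_prop
  have hN0 : (N 0).det ≠ 0 := by simpa [N] using det_updateRow_ne_zero hQ hker i₀ hlπ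
  have hN_inv : ContinuousAt Inv.inv (N 0) :=
    continuousAt_matrix_inv _ (by rw [Ring.inverse_eq_inv']; exact continuousAt_inv₀ hN0)
  have hlim : Tendsto (fun α : ℝ => (N α⁻¹)⁻¹ * B α⁻¹) atTop (𝓝 ((N 0)⁻¹ * B 0)) :=
    ((hN_inv.tendsto.comp (hN.tendsto 0)).mul (hB.tendsto 0)).comp tendsto_inv_atTop_zero
  have hlimit : (N 0)⁻¹ * B 0 = -(l ⬝ᵥ π)⁻¹ • of fun i _ => π i := by
    have hN0_mul : N 0 * (-(l ⬝ᵥ π)⁻¹ • of fun i _ => π i) = B 0 := by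
      simpa [N, B] using updateRow_mul_smul_of_mulVec_eq_zero hπ i₀ l hlπ
    rw [← hN0_mul, nonsing_inv_mul_cancel_left _ _ hN0.isUnit]
  have hdet : ∀ᶠ α : ℝ in atTop, (N α⁻¹).det ≠ 0 :=
    ((hN.matrix_det.tendsto 0).comp tendsto_inv_atTop_zero).eventually_ne hN0
  refine hlimit ▸ hlim.congr' ?_
  filter_upwards [hdet, eventually_ne_atTop 0] with α hα_det hα
  refine (inv_eq_left_inv ?_).symm
  rw [mul_assoc, updateRow_smul_one_mul_smul_sub_diagonal hQ i₀ l hα]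
  exact nonsing_inv_mul _ hα_det.isUnit

end Matrix

theorem stmt_12_general (d : ℕ) (hd : 1 ≤ d)
    (Q : Matrix (Fin d) (Fin d) ℝ)
    (hQcol : ∀ j, ∑ i, Q i j = 0)
    (hrank : Q.rank = d - 1)
    (π : Fin d → ℝ) (hπ : Q *ᵥ π = 0) (hπpos : ∀ i, 0 < π i)
    (l : Fin d → ℝ) (hl : ∀ i, 0 < l i)
    (linf : ℝ) (hlinf : linf = ∑ i, l i * π i) :
    Tendsto (fun α : ℝ => (α • Q - Matrix.diagonal l)⁻¹) atTop
      (nhds (-(1 / linf) • Matrix.of (fun i _ : Fin d => π i))) := by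
  have : Nonempty (Fin d) := ⟨⟨0, hd⟩⟩
  have hQ : 1 ᵥ* Q = 0 := funext fun j => by simpa [vecMul, dotProduct] using hQcol j
  have hπ0 : π ≠ 0 := fun h => (hπpos ⟨0, hd⟩).ne' (by simp [h])
  have hker (v : Fin d → ℝ) (hv : Q *ᵥ v = 0) : ∃ t : ℝ, v = t • π :=
    exists_eq_smul_of_mulVec_eq_zero (by simpa using hrank) hπ hπ0 hv
  have hlπ : l ⬝ᵥ π = linf := hlinf.symm
  have hlinf_pos : 0 < linf :=
    hlinf ▸ Finset.sum_pos (fun i _ => mul_pos (hl i) (hπpos i)) Finset.univ_nonempty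
  rw [one_div, ← hlπ]
  exact tendsto_inv_smul_sub_diagonal hQ hπ hker (hlπ ▸ hlinf_pos.ne')

/-- Rapid switching: `(αQ − diag(λ))⁻¹ → −(1/λ_∞) π 1ᵀ` as `α → ∞`. -/
theorem stmt_12 (d : ℕ) (hd : 1 ≤ d)
    (Q : Matrix (Fin d) (Fin d) ℝ)
    (hQoff : ∀ i j, i ≠ j → 0 ≤ Q i j)
    (hQcol : ∀ j, ∑ i, Q i j = 0)
    (hrank : Q.rank = d - 1)
    (π : Fin d → ℝ) (hπ : Q *ᵥ π = 0) (hπpos : ∀ i, 0 < π i) (hπsum : ∑ i, π i = 1)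
    (l : Fin d → ℝ) (hl : ∀ i, 0 < l i)
    (linf : ℝ) (hlinf : linf = ∑ i, l i * π i) :
    Tendsto (fun α : ℝ => (α • Q - Matrix.diagonal l)⁻¹) atTop
      (nhds (-(1 / linf) • Matrix.of (fun i _ : Fin d => π i))) :=
  stmt_12_general d hd Q hQcol hrank π hπ hπpos l hl linf hlinf
end

section
/- Let Q be a real d×d matrix and λ ∈ ℝ^d, regarded as complex, let n ∈ ℕ and x(0) ∈ ℂ^d. Define φ : ℝ × ℝ → ℂ^d by φ(t,u) = ∑_{j=0}^{n} C(n,j) · e^{iuj} · (1 − e^{iu})^{n−j} · exp(t(Q − (n−j)·diag(λ))) · x(0). Then for every (t,u) the partial derivatives ∂φ/∂t and ∂φ/∂u exist and satisfy the PDE ∂φ/∂t (t,u) = (Q + n(e^{iu} − 1)·diag(λ)) · φ(t,u) + i(e^{iu} − 1) · diag(λ) · ∂φ/∂u (t,u). -/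
/-!
Write `z = e^{iu}`. The `j`-th coefficient of `φ` is the Bernstein polynomial
`b_{n,j}(z) = C(n,j) z^j (1 - z)^{n-j}`, and on functions of `z` the operator `∂/∂u` is `i z d/dz`.
Bernstein polynomials satisfy the Euler-type identity `z (z - 1) b'_{n,j} = (n z - j) b_{n,j}`,
so on the `j`-th summand the right-hand side of the equation acts on the vector factor through
`Q + (n (z - 1) - (n z - j)) diag(λ) = Q - (n - j) diag(λ)`, the generator of the matrix
exponential in that summand, which is what differentiating the summand in `t` produces.
-/

open Matrix NormedSpace Polynomial Complex

theorem Polynomial.X_mul_derivative_X_pow {R : Type*} [CommRing R] (k : ℕ) :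
    X * derivative (X ^ k : R[X]) = (k : R[X]) * X ^ k := by
  cases k with
  | zero => simp
  | succ k => rw [derivative_X_pow, map_natCast]; push_cast; ring

theorem bernsteinPolynomial.X_mul_X_sub_one_mul_derivative (R : Type*) [CommRing R] (n ν : ℕ) :
    X * (X - 1) * derivative (bernsteinPolynomial R n ν) =
      ((n : R[X]) * X - (ν : R[X])) * bernsteinPolynomial R n ν := by
  obtain h | h := lt_or_ge n ν
  · simp [bernsteinPolynomial.eq_zero_of_lt R h]
  obtain ⟨m, rfl⟩ := Nat.exists_eq_add_of_le h
  have hX := X_mul_derivative_X_pow (R := R) ν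
  have hY : (X - 1) * derivative ((1 - X) ^ m : R[X]) = (m : R[X]) * (1 - X) ^ m := by
    cases m with
    | zero => simp
    | succ m => rw [derivative_pow]; simp; ring
  simp only [bernsteinPolynomial, Nat.add_sub_cancel_left, derivative_mul, derivative_natCast]
  push_cast
  linear_combination ((ν + m).choose ν : R[X]) * (X - 1) * (1 - X) ^ m * hX
    + ((ν + m).choose ν : R[X]) * X ^ ν * X * hY

theorem bernsteinPolynomial.eval_cexp_I_mul (n ν : ℕ) (u : ℝ) :
    (bernsteinPolynomial ℂ n ν).eval (cexp (I * u)) =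
      n.choose ν * cexp (I * u * ν) * (1 - cexp (I * u)) ^ (n - ν) := by
  simp [bernsteinPolynomial, mul_comm _ (ν : ℂ), Complex.exp_nat_mul]

theorem bernsteinPolynomial.eval_smul_mulVec_sub_smul {ι : Type*} [Fintype ι]
    (Q D : Matrix ι ι ℂ) (w : ι → ℂ) {n ν : ℕ} (hν : ν ≤ n) (z : ℂ) :
    (bernsteinPolynomial ℂ n ν).eval z • ((Q - ((n - ν : ℕ) : ℂ) • D) *ᵥ w) =
      (Q + ((n : ℂ) * (z - 1)) • D) *ᵥ ((bernsteinPolynomial ℂ n ν).eval z • w) +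
        (I * (z - 1)) •
          (D *ᵥ (((bernsteinPolynomial ℂ n ν).derivative.eval z * (I * z)) • w)) := by
  have euler := congrArg (eval z) (X_mul_X_sub_one_mul_derivative ℂ n ν)
  simp only [eval_mul, eval_sub, eval_X, eval_one, eval_natCast] at euler
  simp only [Matrix.sub_mulVec, Matrix.add_mulVec, Matrix.smul_mulVec, Matrix.mulVec_smul]
  match_scalars
  · ring
  · push_cast [hν]
    linear_combination euler +
      z * (1 - z) * (bernsteinPolynomial ℂ n ν).derivative.eval z * I_sq

theorem hasDerivAt_eval_cexp_I_mul (p : ℂ[X]) (u : ℝ) :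
    HasDerivAt (fun v : ℝ => p.eval (cexp (I * v)))
      (p.derivative.eval (cexp (I * u)) * (I * cexp (I * u))) u := by
  have h : HasDerivAt (fun w : ℂ => cexp (I * w)) (cexp (I * u) * I) u := by
    simpa using ((hasDerivAt_id (u : ℂ)).const_mul I).cexp
  simpa [mul_comm] using ((p.hasDerivAt _).comp (u : ℂ) h).comp_ofReal

section

attribute [local instance] Matrix.linftyOpNormedRing Matrix.linftyOpNormedAlgebra

theorem Matrix.hasDerivAt_exp_ofReal_smul_mulVec {ι : Type*} [Fintype ι] [DecidableEq ι]
    (A : Matrix ι ι ℂ) (x : ι → ℂ) (t : ℝ) :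
    HasDerivAt (fun s : ℝ => exp ((s : ℂ) • A) *ᵥ x) ((A * exp ((t : ℂ) • A)) *ᵥ x) t := by
  have : CompleteSpace (Matrix ι ι ℂ) := FiniteDimensional.complete ℂ _
  let L : Matrix ι ι ℂ →L[ℂ] ι → ℂ :=
    LinearMap.toContinuousLinearMap ((Matrix.toLin' : _ ≃ₗ[ℂ] _).toLinearMap.flip x)
  have hexp := (hasDerivAt_exp_smul_const' (𝕂 := ℂ) A (t : ℂ)).scomp t
    (hasDerivAt_id t).ofReal_comp
  rw [ofReal_one, one_smul] at hexp
  exact ((L.hasFDerivAt).restrictScalars ℝ).comp_hasDerivAt t hexp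

end
theorem stmt_18_general (d : ℕ) (n : ℕ) (x0 : Fin d → ℂ)
    (Qc : Matrix (Fin d) (Fin d) ℂ) (lc : Fin d → ℂ)
    (φ : ℝ → ℝ → (Fin d → ℂ))
    (hφ : ∀ t u : ℝ, φ t u =
      ∑ j ∈ Finset.range (n + 1),
        ((Nat.choose n j : ℂ) * Complex.exp (Complex.I * u * j) *
            (1 - Complex.exp (Complex.I * u)) ^ (n - j)) •
          (NormedSpace.exp ((t : ℂ) • (Qc - ((n - j : ℕ) : ℂ) • Matrix.diagonal lc)) *ᵥ x0)) :
    ∀ t u : ℝ, ∃ Dt Du : Fin d → ℂ,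
      HasDerivAt (fun t' : ℝ => φ t' u) Dt t ∧
      HasDerivAt (fun u' : ℝ => φ t u') Du u ∧
      Dt = (Qc + ((n : ℂ) * (Complex.exp (Complex.I * u) - 1)) • Matrix.diagonal lc) *ᵥ φ t u +
        (Complex.I * (Complex.exp (Complex.I * u) - 1)) • (Matrix.diagonal lc *ᵥ Du) := by
  intro t u
  simp_rw [← bernsteinPolynomial.eval_cexp_I_mul] at hφ
  set A : ℕ → Matrix (Fin d) (Fin d) ℂ := fun j => Qc - ((n - j : ℕ) : ℂ) • diagonal lc
  set b : ℕ → ℂ[X] := bernsteinPolynomial ℂ n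
  set z := cexp (I * u)
  refine ⟨∑ j ∈ Finset.range (n + 1), (b j).eval z • (A j *ᵥ (exp ((t : ℂ) • A j) *ᵥ x0)),
    ∑ j ∈ Finset.range (n + 1), ((b j).derivative.eval z * (I * z)) • (exp ((t : ℂ) • A j) *ᵥ x0),
    ?_, ?_, ?_⟩
  · rw [funext (hφ · u)]
    refine HasDerivAt.fun_sum fun j _ => ?_
    rw [mulVec_mulVec]
    exact (hasDerivAt_exp_ofReal_smul_mulVec (A j) x0 t).const_smul ((b j).eval z)
  · rw [funext (hφ t)]
    exact HasDerivAt.fun_sum fun j _ => (hasDerivAt_eval_cexp_I_mul (b j) u).smul_const _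
  · rw [hφ, mulVec_sum, mulVec_sum, Finset.smul_sum, ← Finset.sum_add_distrib]
    refine Finset.sum_congr rfl fun j hj => ?_
    exact bernsteinPolynomial.eval_smul_mulVec_sub_smul _ _ _ (Finset.mem_range_succ_iff.mp hj) z

/-- The characteristic function `φ(t,u) = ∑ⱼ C(n,j) e^{iuj}(1−e^{iu})^{n−j} exp(t Q_{(n−j)λ}) x(0)`
satisfies the PDE `∂φ/∂t = (Q + n(e^{iu}−1)diag(λ))φ + i(e^{iu}−1)diag(λ) ∂φ/∂u`. -/
theorem stmt_18 (d : ℕ) (hd : 1 ≤ d) (n : ℕ)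
    (Q : Matrix (Fin d) (Fin d) ℝ) (l : Fin d → ℝ) (x0 : Fin d → ℂ)
    (Qc : Matrix (Fin d) (Fin d) ℂ) (hQc : Qc = Q.map (Complex.ofReal))
    (lc : Fin d → ℂ) (hlc : lc = fun i => (l i : ℂ))
    (φ : ℝ → ℝ → (Fin d → ℂ))
    (hφ : ∀ t u : ℝ, φ t u =
      ∑ j ∈ Finset.range (n + 1),
        ((Nat.choose n j : ℂ) * Complex.exp (Complex.I * u * j) *
            (1 - Complex.exp (Complex.I * u)) ^ (n - j)) •
          (NormedSpace.exp ((t : ℂ) • (Qc - ((n - j : ℕ) : ℂ) • Matrix.diagonal lc)) *ᵥ x0)) :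
    ∀ t u : ℝ, ∃ Dt Du : Fin d → ℂ,
      HasDerivAt (fun t' : ℝ => φ t' u) Dt t ∧
      HasDerivAt (fun u' : ℝ => φ t u') Du u ∧
      Dt = (Qc + ((n : ℂ) * (Complex.exp (Complex.I * u) - 1)) • Matrix.diagonal lc) *ᵥ φ t u +
        (Complex.I * (Complex.exp (Complex.I * u) - 1)) • (Matrix.diagonal lc *ᵥ Du) :=
  stmt_18_general d n x0 Qc lc φ hφ
end
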